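/- arXiv:1211.1621 — 2 statements merged into one kernel-verified Lean document; each statement's English description precedes it below -/
import Mathlib

section
/- Let n ≥ 1 and let f̃ : ℝ^{n×n} → ℝ be differentiable, positive, invariant under orthogonal conjugation (f̃(QZQᵀ) = f̃(Z) for all Q ∈ O(n), Z ∈ ℝ^{n×n}) and under transposition (f̃(Zᵀ) = f̃(Z) for all Z). Define the score map G : SO(n) → ℝ^{n×n} by G(Z) = (1/f̃(Z))·skew((∇f̃(Z))ᵀZ). Then G(Z) is skew-symmetric for every Z ∈ SO(n), and for every Q ∈ O(n) and Z ∈ SO(n): G(QZQᵀ) = Q·G(Z)·Qᵀ and G(Zᵀ) = −G(Z). -/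
open Matrix

noncomputable section

attribute [local instance] Matrix.normedAddCommGroup Matrix.normedSpace

/-- The special orthogonal group `SO(n)`, as a set of `n × n` real matrices. -/
def SO (n : ℕ) : Set (Matrix (Fin n) (Fin n) ℝ) :=
  {A | A * Aᵀ = 1 ∧ A.det = 1}

/-- The orthogonal group `O(n)`, as a set of `n × n` real matrices. -/
def ON (n : ℕ) : Set (Matrix (Fin n) (Fin n) ℝ) :=
  {A | A * Aᵀ = 1}

/-- The skew-symmetric part `(A - Aᵀ)/2` of a square matrix. -/
def skewPart {n : ℕ} (A : Matrix (Fin n) (Fin n) ℝ) : Matrix (Fin n) (Fin n) ℝ :=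
  (2 : ℝ)⁻¹ • (A - Aᵀ)

/-- The Euclidean (Frobenius) gradient of `f : ℝ^{n×n} → ℝ`. -/
def grad {n : ℕ} (f : Matrix (Fin n) (Fin n) ℝ → ℝ) (Z : Matrix (Fin n) (Fin n) ℝ) :
    Matrix (Fin n) (Fin n) ℝ :=
  Matrix.of fun i j => fderiv ℝ f Z (Matrix.single i j 1)

/-- The score map `G(Z) = (1 / f(Z)) · skew((∇f(Z))ᵀ Z)`. -/
def scoreG {n : ℕ} (f : Matrix (Fin n) (Fin n) ℝ → ℝ) (Z : Matrix (Fin n) (Fin n) ℝ) :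
    Matrix (Fin n) (Fin n) ℝ :=
  (f Z)⁻¹ • skewPart ((grad f Z)ᵀ * Z)

/-- The Frobenius inner product `⟨A, B⟩ = trace(Aᵀ B)`. -/
def frobInner {n : ℕ} (A B : Matrix (Fin n) (Fin n) ℝ) : ℝ :=
  (Aᵀ * B).trace

/-!
If `f ∘ L = f` for a linear map `L`, the chain rule gives `Df(Z) = Df(L Z) ∘ L`; pairing with
the Frobenius inner product turns this into `∇f(L Z) = L ∇f(Z)` when `L` is conjugation by an
orthogonal `Q` (then `L⁻¹` is the adjoint of `L`) or transposition. Since `skew` commutes with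
conjugation and `f(QZQᵀ) = f(Z)`, equivariance of `G` follows. For `Z` orthogonal, conjugation by
`Z` fixes `Z`, so `∇f(Z)` commutes with `Z`; hence `∇f(Zᵀ)ᵀ Zᵀ = ∇f(Z) Zᵀ = Zᵀ ∇f(Z)` is the
transpose of `∇f(Z)ᵀ Z`, and `skew` changes sign under transposition.
-/

lemma fderiv_apply_eq_of_comp_eq {E F : Type*} [NormedAddCommGroup E] [NormedSpace ℝ E]
    [NormedAddCommGroup F] [NormedSpace ℝ F] {f : E → F} (L : E →L[ℝ] E) (hfL : f ∘ L = f)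
    {x : E} (hf : DifferentiableAt ℝ f (L x)) (h : E) :
    fderiv ℝ f x h = fderiv ℝ f (L x) (L h) := by
  conv_lhs => rw [← hfL]
  rw [fderiv_comp x hf L.differentiableAt, L.fderiv]
  rfl

section Frobenius

variable {n : ℕ}

def conjCLM (Q : Matrix (Fin n) (Fin n) ℝ) :
    Matrix (Fin n) (Fin n) ℝ →L[ℝ] Matrix (Fin n) (Fin n) ℝ :=
  ⟨(LinearMap.mulRight ℝ Qᵀ).comp (LinearMap.mulLeft ℝ Q),
    (continuous_const.matrix_mul continuous_id).matrix_mul continuous_const⟩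

def transposeCLM : Matrix (Fin n) (Fin n) ℝ →L[ℝ] Matrix (Fin n) (Fin n) ℝ :=
  ⟨(transposeLinearEquiv (Fin n) (Fin n) ℝ ℝ).toLinearMap, continuous_id.matrix_transpose⟩

@[simp] lemma conjCLM_apply (Q H : Matrix (Fin n) (Fin n) ℝ) : conjCLM Q H = Q * H * Qᵀ := rfl

@[simp] lemma transposeCLM_apply (H : Matrix (Fin n) (Fin n) ℝ) : transposeCLM H = Hᵀ := rfl

lemma frobInner_single (A : Matrix (Fin n) (Fin n) ℝ) (i j : Fin n) :
    frobInner A (single i j 1) = A i j := by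
  simp [frobInner, trace_mul_single]

lemma frobInner_conj (A Q H : Matrix (Fin n) (Fin n) ℝ) :
    frobInner A (Qᵀ * H * Q) = frobInner (Q * A * Qᵀ) H := by
  calc (Aᵀ * (Qᵀ * H * Q)).trace = (Aᵀ * Qᵀ * H * Q).trace := by simp only [Matrix.mul_assoc]
    _ = (Q * (Aᵀ * Qᵀ * H)).trace := trace_mul_comm _ _
    _ = ((Q * A * Qᵀ)ᵀ * H).trace := by
        simp only [transpose_mul, transpose_transpose, Matrix.mul_assoc]

lemma frobInner_transpose_right (A H : Matrix (Fin n) (Fin n) ℝ) :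
    frobInner A Hᵀ = frobInner Aᵀ H := by
  rw [frobInner, frobInner, transpose_transpose, ← transpose_mul, trace_transpose, trace_mul_comm]

lemma frobInner_eq_sum (A B : Matrix (Fin n) (Fin n) ℝ) :
    frobInner A B = ∑ i, ∑ j, A i j * B i j := by
  simp only [frobInner, Matrix.trace, Matrix.mul_apply, transpose_apply, diag_apply]
  exact Finset.sum_comm

lemma fderiv_apply_eq_frobInner_grad (f : Matrix (Fin n) (Fin n) ℝ → ℝ)
    (Z H : Matrix (Fin n) (Fin n) ℝ) : fderiv ℝ f Z H = frobInner (grad f Z) H := by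
  conv_lhs => rw [matrix_eq_sum_single H]
  simp only [map_sum, frobInner_eq_sum]
  refine Finset.sum_congr rfl fun k _ => Finset.sum_congr rfl fun l _ => ?_
  rw [show single k l (H k l) = H k l • single k l 1 by rw [smul_single, smul_eq_mul, mul_one],
    _root_.map_smul, smul_eq_mul, mul_comm]
  rfl

lemma grad_eq_of_fderiv_eq_frobInner {f : Matrix (Fin n) (Fin n) ℝ → ℝ}
    {Z A : Matrix (Fin n) (Fin n) ℝ} (h : ∀ H, fderiv ℝ f Z H = frobInner A H) :
    grad f Z = A := by
  ext i j
  rw [← frobInner_single A, ← h]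
  rfl

end Frobenius

section Gradient

variable {n : ℕ} {f : Matrix (Fin n) (Fin n) ℝ → ℝ}

lemma grad_conj {Q : Matrix (Fin n) (Fin n) ℝ} (hQ : Q * Qᵀ = 1)
    (hinv : ∀ Z, f (Q * Z * Qᵀ) = f Z) {Z : Matrix (Fin n) (Fin n) ℝ}
    (hf : DifferentiableAt ℝ f (Q * Z * Qᵀ)) :
    grad f (Q * Z * Qᵀ) = Q * grad f Z * Qᵀ := by
  have hfQ : f ∘ conjCLM Q = f := funext fun W => by simp [hinv]
  refine grad_eq_of_fderiv_eq_frobInner fun H => ?_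
  have hH : Q * (Qᵀ * H * Q) * Qᵀ = H := by
    simp only [← Matrix.mul_assoc, hQ, Matrix.one_mul]
    rw [Matrix.mul_assoc, hQ, Matrix.mul_one]
  calc fderiv ℝ f (Q * Z * Qᵀ) H = fderiv ℝ f (conjCLM Q Z) (conjCLM Q (Qᵀ * H * Q)) := by
        rw [conjCLM_apply, conjCLM_apply, hH]
    _ = fderiv ℝ f Z (Qᵀ * H * Q) :=
        (fderiv_apply_eq_of_comp_eq (conjCLM Q) hfQ hf _).symm
    _ = frobInner (Q * grad f Z * Qᵀ) H := by
        rw [fderiv_apply_eq_frobInner_grad, frobInner_conj]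

lemma grad_transpose (hinv : ∀ Z, f Zᵀ = f Z) {Z : Matrix (Fin n) (Fin n) ℝ}
    (hf : DifferentiableAt ℝ f Zᵀ) : grad f Zᵀ = (grad f Z)ᵀ := by
  have hfT : f ∘ transposeCLM = f := funext fun W => by simp [hinv]
  refine grad_eq_of_fderiv_eq_frobInner fun H => ?_
  calc fderiv ℝ f Zᵀ H = fderiv ℝ f (transposeCLM Z) (transposeCLM Hᵀ) := by
        rw [transposeCLM_apply, transposeCLM_apply, transpose_transpose]
    _ = fderiv ℝ f Z Hᵀ := (fderiv_apply_eq_of_comp_eq transposeCLM hfT hf _).symm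
    _ = frobInner (grad f Z)ᵀ H := by
        rw [fderiv_apply_eq_frobInner_grad, frobInner_transpose_right]

/-- `Z` is fixed by its own conjugation, so `grad_conj` gives `∇f(Z) = Z ∇f(Z) Zᵀ`. -/
lemma grad_mul_transpose_comm_self {Z : Matrix (Fin n) (Fin n) ℝ} (hZ : Z * Zᵀ = 1)
    (hinv : ∀ W, f (Z * W * Zᵀ) = f W) (hf : DifferentiableAt ℝ f Z) :
    grad f Z * Zᵀ = Zᵀ * grad f Z := by
  have hZZ : Z * Z * Zᵀ = Z := by rw [Matrix.mul_assoc, hZ, Matrix.mul_one]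
  have hfix := grad_conj hZ hinv (Z := Z) (by rwa [hZZ])
  rw [hZZ] at hfix
  conv_rhs => rw [hfix]
  rw [← Matrix.mul_assoc, ← Matrix.mul_assoc, mul_eq_one_comm.mp hZ, Matrix.one_mul]

end Gradient

section Score

variable {n : ℕ}

lemma skewPart_transpose (A : Matrix (Fin n) (Fin n) ℝ) : skewPart Aᵀ = -skewPart A := by
  simp [skewPart, smul_sub]

lemma transpose_skewPart (A : Matrix (Fin n) (Fin n) ℝ) : (skewPart A)ᵀ = -skewPart A := by
  simp [skewPart, smul_sub]

lemma skewPart_conj (Q A : Matrix (Fin n) (Fin n) ℝ) :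
    skewPart (Q * A * Qᵀ) = Q * skewPart A * Qᵀ := by
  simp [skewPart, transpose_mul, Matrix.mul_sub, Matrix.sub_mul, Matrix.mul_assoc]

variable {f : Matrix (Fin n) (Fin n) ℝ → ℝ}

lemma transpose_scoreG (Z : Matrix (Fin n) (Fin n) ℝ) : (scoreG f Z)ᵀ = -scoreG f Z := by
  rw [scoreG, transpose_smul, transpose_skewPart, smul_neg]

lemma scoreG_conj {Q : Matrix (Fin n) (Fin n) ℝ} (hQ : Q * Qᵀ = 1)
    (hinv : ∀ Z, f (Q * Z * Qᵀ) = f Z) {Z : Matrix (Fin n) (Fin n) ℝ}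
    (hf : DifferentiableAt ℝ f (Q * Z * Qᵀ)) :
    scoreG f (Q * Z * Qᵀ) = Q * scoreG f Z * Qᵀ := by
  have hprod : (Q * grad f Z * Qᵀ)ᵀ * (Q * Z * Qᵀ) = Q * ((grad f Z)ᵀ * Z) * Qᵀ := by
    simp only [transpose_mul, transpose_transpose, Matrix.mul_assoc]
    rw [← Matrix.mul_assoc Qᵀ Q, mul_eq_one_comm.mp hQ, Matrix.one_mul]
  rw [scoreG, scoreG, grad_conj hQ hinv hf, hinv, hprod, skewPart_conj, Matrix.mul_smul,
    Matrix.smul_mul]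

lemma scoreG_transpose {Z : Matrix (Fin n) (Fin n) ℝ} (hZ : Z * Zᵀ = 1)
    (hconj : ∀ W, f (Z * W * Zᵀ) = f W) (htrans : ∀ W, f Wᵀ = f W)
    (hf : DifferentiableAt ℝ f Z) (hfT : DifferentiableAt ℝ f Zᵀ) :
    scoreG f Zᵀ = -scoreG f Z := by
  rw [scoreG, scoreG, grad_transpose htrans hfT, transpose_transpose, htrans,
    grad_mul_transpose_comm_self hZ hconj hf, show Zᵀ * grad f Z = ((grad f Z)ᵀ * Z)ᵀ by rw [transpose_mul, transpose_transpose],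
    skewPart_transpose, smul_neg]

end Score

theorem stmt9_general {n : ℕ} (f : Matrix (Fin n) (Fin n) ℝ → ℝ)
    (hf : Differentiable ℝ f)
    (hspec : ∀ Q ∈ ON n, ∀ Z, f (Q * Z * Qᵀ) = f Z)
    (htrans : ∀ Z, f Zᵀ = f Z) :
    (∀ Z ∈ SO n, (scoreG f Z)ᵀ = -scoreG f Z) ∧
    (∀ Q ∈ ON n, ∀ Z ∈ SO n, scoreG f (Q * Z * Qᵀ) = Q * scoreG f Z * Qᵀ) ∧
    (∀ Z ∈ SO n, scoreG f Zᵀ = -scoreG f Z) :=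
  ⟨fun Z _ => transpose_scoreG Z,
    fun Q hQ _ _ => scoreG_conj hQ (hspec Q hQ) (hf _),
    fun Z hZ => scoreG_transpose hZ.1 (hspec Z hZ.1) htrans (hf Z) (hf Zᵀ)⟩

theorem stmt9 {n : ℕ} (hn : 1 ≤ n) (f : Matrix (Fin n) (Fin n) ℝ → ℝ)
    (hf : Differentiable ℝ f) (hpos : ∀ Z, 0 < f Z)
    (hspec : ∀ Q ∈ ON n, ∀ Z, f (Q * Z * Qᵀ) = f Z)
    (htrans : ∀ Z, f Zᵀ = f Z) :
    (∀ Z ∈ SO n, (scoreG f Z)ᵀ = -scoreG f Z) ∧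
    (∀ Q ∈ ON n, ∀ Z ∈ SO n, scoreG f (Q * Z * Qᵀ) = Q * scoreG f Z * Qᵀ) ∧
    (∀ Z ∈ SO n, scoreG f Zᵀ = -scoreG f Z) :=
  stmt9_general f hf hspec htrans
end
end

section
/- Let n ≥ 1, let μ be the Haar probability measure on SO(n), and let f : SO(n) → ℝ be a probability density with respect to μ (f ≥ 0, ∫_{SO(n)} f dμ = 1) that is spectral: f(QZQᵀ) = f(Z) for every Q ∈ O(n) and Z ∈ SO(n). Let Φ : SO(n) → ℝ^{n×n} be a measurable map, integrable with respect to f·μ, such that Φ(Z) is skew-symmetric for every Z and Φ is equivariant: Φ(QZQᵀ) = Q·Φ(Z)·Qᵀ for every Q ∈ O(n) and Z ∈ SO(n). Then the mean vanishes: ∫_{SO(n)} Φ(Z) f(Z) dμ(Z) = 0. (In particular, every spectral probability density on SO(n) has zero bias around the identity, the case Φ = matrix logarithm.) -/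
/-! Conjugating by the reflection `D` that flips the `i`-th coordinate preserves the density `f`
and negates the `(i, j)` entry of `Φ` for `j ≠ i`; it also preserves the Haar measure, so the integral
of that entry is its own negative. Diagonal entries vanish by skew-symmetry. Since `D` need not lie
in `SO(n)` (for `n = 2` no rotation will do), invariance of the Haar measure under conjugation by `D`
comes from uniqueness: the conjugated measure is again a left-invariant probability measure on
`SO(n)`. -/

open Matrix MeasureTheory Real

noncomputable section

instance {n : ℕ} : MeasurableSpace (Matrix (Fin n) (Fin n) ℝ) :=
  (inferInstance : MeasurableSpace (Fin n → Fin n → ℝ))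

/-- `μ` is the Haar probability measure of `SO(n)`. -/
def IsHaarSO (n : ℕ) (μ : Measure (Matrix (Fin n) (Fin n) ℝ)) : Prop :=
  IsProbabilityMeasure μ ∧ μ (SO n)ᶜ = 0 ∧
    (∀ g ∈ SO n, Measure.map (fun Z => g * Z) μ = μ) ∧
    (∀ g ∈ SO n, Measure.map (fun Z => Z * g) μ = μ)

open scoped ENNReal

/-- By Fubini, both `μ A` and `ν A` equal the `μ.prod ν`-mass of `{(z, w) | z * w ∈ A}`. -/
theorem Measure.eq_of_map_mul_right_eq_of_map_mul_left_eq {M : Type*} [Monoid M]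
    [MeasurableSpace M] [MeasurableMul₂ M] {G : Set M} {μ ν : Measure M}
    [IsProbabilityMeasure μ] [IsProbabilityMeasure ν]
    (hμG : ∀ᵐ g ∂μ, g ∈ G) (hνG : ∀ᵐ g ∂ν, g ∈ G)
    (hμ : ∀ g ∈ G, μ.map (· * g) = μ) (hν : ∀ g ∈ G, ν.map (g * ·) = ν) : μ = ν := by
  ext A hA
  have hind : Measurable (A.indicator (1 : M → ℝ≥0∞)) := measurable_one.indicator hA
  calc μ A = ∫⁻ w, ∫⁻ z, A.indicator 1 (z * w) ∂μ ∂ν := by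
        rw [lintegral_congr_ae (g := fun _ => μ A), lintegral_const, measure_univ, mul_one]
        filter_upwards [hνG] with w hw
        rw [← lintegral_map hind (measurable_mul_const w), hμ w hw, lintegral_indicator_one hA]
    _ = ∫⁻ z, ∫⁻ w, A.indicator 1 (z * w) ∂ν ∂μ :=
        (lintegral_lintegral_swap (f := fun z w => A.indicator 1 (z * w))
          (hind.comp measurable_mul).aemeasurable).symm
    _ = ν A := by
        rw [lintegral_congr_ae (g := fun _ => ν A), lintegral_const, measure_univ, mul_one]
        filter_upwards [hμG] with z hz
        rw [← lintegral_map hind (measurable_const_mul z), hν z hz, lintegral_indicator_one hA]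

instance {n : ℕ} : BorelSpace (Matrix (Fin n) (Fin n) ℝ) :=
  inferInstanceAs (BorelSpace (Fin n → Fin n → ℝ))

instance {n : ℕ} : SecondCountableTopology (Matrix (Fin n) (Fin n) ℝ) :=
  inferInstanceAs (SecondCountableTopology (Fin n → Fin n → ℝ))

section Conjugation

variable {n : ℕ} {Q : Matrix (Fin n) (Fin n) ℝ}

lemma mul_transpose_self_of_mem_ON (hQ : Q ∈ ON n) : Q * Qᵀ = 1 :=
  hQ

lemma transpose_mul_self_of_mem_ON (hQ : Q ∈ ON n) : Qᵀ * Q = 1 :=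
  mul_eq_one_comm.mp hQ

lemma transpose_mem_ON (hQ : Q ∈ ON n) : Qᵀ ∈ ON n := by
  simpa [ON] using transpose_mul_self_of_mem_ON hQ

lemma conj_mem_SO (hQ : Q ∈ ON n) {Z : Matrix (Fin n) (Fin n) ℝ} (hZ : Z ∈ SO n) :
    Q * Z * Qᵀ ∈ SO n := by
  obtain ⟨hZZ, hdetZ⟩ := hZ
  have hdetQ : Q.det * Q.det = 1 := by simpa [det_mul, det_transpose] using congrArg det hQ
  refine ⟨?_, by simp [det_mul, det_transpose, hdetZ, hdetQ]⟩
  calc Q * Z * Qᵀ * (Q * Z * Qᵀ)ᵀ = Q * Z * (Qᵀ * Q) * Zᵀ * Qᵀ := by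
        simp only [transpose_mul, transpose_transpose, Matrix.mul_assoc]
    _ = 1 := by rw [transpose_mul_self_of_mem_ON hQ, Matrix.mul_one, Matrix.mul_assoc Q,
        hZZ, Matrix.mul_one, hQ]

def conjON (hQ : Q ∈ ON n) : Matrix (Fin n) (Fin n) ℝ ≃ᵐ Matrix (Fin n) (Fin n) ℝ where
  toFun Z := Q * Z * Qᵀ
  invFun Z := Qᵀ * Z * Q
  left_inv Z := by
    simp only [← Matrix.mul_assoc, transpose_mul_self_of_mem_ON hQ, Matrix.one_mul]
    rw [Matrix.mul_assoc, transpose_mul_self_of_mem_ON hQ, Matrix.mul_one]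
  right_inv Z := by
    simp only [← Matrix.mul_assoc, mul_transpose_self_of_mem_ON hQ, Matrix.one_mul]
    rw [Matrix.mul_assoc, mul_transpose_self_of_mem_ON hQ, Matrix.mul_one]
  measurable_toFun := show Measurable fun Z => Q * Z * Qᵀ by fun_prop
  measurable_invFun := show Measurable fun Z => Qᵀ * Z * Q by fun_prop

lemma conjON_apply (hQ : Q ∈ ON n) (Z : Matrix (Fin n) (Fin n) ℝ) :
    conjON hQ Z = Q * Z * Qᵀ := rfl

lemma IsHaarSO.map_conjON {μ : Measure (Matrix (Fin n) (Fin n) ℝ)} (hμ : IsHaarSO n μ)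
    (hQ : Q ∈ ON n) : μ.map (conjON hQ) = μ := by
  obtain ⟨hprob, hnull, hleft, hright⟩ := hμ
  have : IsProbabilityMeasure (μ.map (conjON hQ)) :=
    Measure.isProbabilityMeasure_map (conjON hQ).measurable.aemeasurable
  refine (Measure.eq_of_map_mul_right_eq_of_map_mul_left_eq (ae_iff.2 hnull) ?_ hright ?_).symm
  · rw [ae_iff, MeasurableEquiv.map_apply]
    exact measure_mono_null (fun Z hZ hZSO => hZ (conj_mem_SO hQ hZSO)) hnull
  · intro g hg
    have hcomm : (g * ·) ∘ conjON hQ = conjON hQ ∘ (Qᵀ * g * Q * ·) := by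
      funext Z
      simp only [Function.comp_apply, conjON_apply, ← Matrix.mul_assoc,
        mul_transpose_self_of_mem_ON hQ, Matrix.one_mul]
    have hg' : Qᵀ * g * Q ∈ SO n := by
      simpa using conj_mem_SO (transpose_mem_ON hQ) hg
    rw [Measure.map_map (measurable_const_mul g) (conjON hQ).measurable, hcomm,
      ← Measure.map_map (conjON hQ).measurable (measurable_const_mul _), hleft _ hg']

lemma IsHaarSO.integral_conj {E : Type*} [NormedAddCommGroup E] [NormedSpace ℝ E]
    {μ : Measure (Matrix (Fin n) (Fin n) ℝ)} (hμ : IsHaarSO n μ) (hQ : Q ∈ ON n)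
    (F : Matrix (Fin n) (Fin n) ℝ → E) : ∫ Z, F (Q * Z * Qᵀ) ∂μ = ∫ Z, F Z ∂μ := by
  conv_rhs => rw [← hμ.map_conjON hQ]
  exact (integral_map_equiv (conjON hQ) F).symm

end Conjugation

def signFlip {n : ℕ} (i : Fin n) : Matrix (Fin n) (Fin n) ℝ :=
  diagonal fun k => if k = i then -1 else 1

lemma signFlip_mem_ON {n : ℕ} (i : Fin n) : signFlip i ∈ ON n := by
  change signFlip i * (signFlip i)ᵀ = 1
  rw [signFlip, diagonal_transpose, diagonal_mul_diagonal, ← diagonal_one]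
  congr 1
  funext k
  split_ifs <;> norm_num

lemma signFlip_conj_apply {n : ℕ} {i j : Fin n} (hij : i ≠ j) (A : Matrix (Fin n) (Fin n) ℝ) :
    (signFlip i * A * (signFlip i)ᵀ) i j = -A i j := by
  simp [signFlip, diagonal_transpose, mul_diagonal, diagonal_mul, hij.symm]

theorem stmt12_general {n : ℕ} (μ : Measure (Matrix (Fin n) (Fin n) ℝ))
    (hμ : IsHaarSO n μ) (f : Matrix (Fin n) (Fin n) ℝ → ℝ)
    (hspec : ∀ Q ∈ ON n, ∀ Z ∈ SO n, f (Q * Z * Qᵀ) = f Z)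
    (Φ : Matrix (Fin n) (Fin n) ℝ → Matrix (Fin n) (Fin n) ℝ)
    (hΦskew : ∀ Z ∈ SO n, (Φ Z)ᵀ = -Φ Z)
    (hΦequiv : ∀ Q ∈ ON n, ∀ Z ∈ SO n, Φ (Q * Z * Qᵀ) = Q * Φ Z * Qᵀ) :
    ∀ i j, ∫ Z, Φ Z i j * f Z ∂μ = 0 := by
  intro i j
  have hSO : ∀ᵐ Z ∂μ, Z ∈ SO n := ae_iff.2 hμ.2.1
  rcases eq_or_ne i j with rfl | hij
  · refine integral_eq_zero_of_ae ?_
    filter_upwards [hSO] with Z hZ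
    have hdiag : Φ Z i i = -Φ Z i i := congrFun (congrFun (hΦskew Z hZ) i) i
    simp [show Φ Z i i = 0 by linarith]
  · have hD := signFlip_mem_ON i
    have hodd : ∫ Z, Φ Z i j * f Z ∂μ = -∫ Z, Φ Z i j * f Z ∂μ := calc
      ∫ Z, Φ Z i j * f Z ∂μ
          = ∫ Z, Φ (signFlip i * Z * (signFlip i)ᵀ) i j * f (signFlip i * Z * (signFlip i)ᵀ) ∂μ :=
        (hμ.integral_conj hD fun Z => Φ Z i j * f Z).symm
      _ = ∫ Z, -(Φ Z i j * f Z) ∂μ := integral_congr_ae <| by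
        filter_upwards [hSO] with Z hZ
        rw [hspec _ hD Z hZ, hΦequiv _ hD Z hZ, signFlip_conj_apply hij, neg_mul]
      _ = -∫ Z, Φ Z i j * f Z ∂μ := integral_neg _
    linarith

theorem stmt12 {n : ℕ} (hn : 1 ≤ n) (μ : Measure (Matrix (Fin n) (Fin n) ℝ))
    (hμ : IsHaarSO n μ) (f : Matrix (Fin n) (Fin n) ℝ → ℝ)
    (hfm : Measurable f) (hnn : ∀ Z, 0 ≤ f Z) (hnorm : ∫ Z, f Z ∂μ = 1)
    (hspec : ∀ Q ∈ ON n, ∀ Z ∈ SO n, f (Q * Z * Qᵀ) = f Z)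
    (Φ : Matrix (Fin n) (Fin n) ℝ → Matrix (Fin n) (Fin n) ℝ)
    (hΦm : Measurable Φ)
    (hΦint : ∀ i j, Integrable (fun Z => Φ Z i j * f Z) μ)
    (hΦskew : ∀ Z ∈ SO n, (Φ Z)ᵀ = -Φ Z)
    (hΦequiv : ∀ Q ∈ ON n, ∀ Z ∈ SO n, Φ (Q * Z * Qᵀ) = Q * Φ Z * Qᵀ) :
    ∀ i j, ∫ Z, Φ Z i j * f Z ∂μ = 0 :=
  stmt12_general μ hμ f hspec Φ hΦskew hΦequiv
end
end
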